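/- arXiv:2404.07057 — 3 statements merged into one kernel-verified Lean document; each statement's English description precedes it below -/
import Mathlib

section
/- For the string s_k = ∏_{i=1}^{k} a^i b with k ≥ 2, the number of distinct substrings of length k is at least k - 1 (in fact, all strings a^j b a^{k-1-j} for 0 ≤ j ≤ k-2 occur as substrings of s_k), and hence the substring complexity measure δ(s_k) = max_m (T_m/m) satisfies δ(s_k) ≥ (k-1)/k. -/
/-- Substring complexity measure `δ(T) = max_{m ≥ 1} T_m / m`, where `T_m` is the number
of distinct substrings (infixes) of `T` of length `m`. -/
noncomputable def deltaM {α : Type*} (T : List α) : ℝ :=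
  ⨆ m : ℕ, ({w : List α | w.length = m + 1 ∧ w <:+: T}.ncard : ℝ) / (m + 1)

/-- The string `s_k = ∏_{i=1}^k a^i b` over `Fin 2` (with `a = 0`, `b = 1`). -/
def sk (k : ℕ) : List (Fin 2) :=
  (List.range k).flatMap fun i => List.replicate (i + 1) (0 : Fin 2) ++ [1]

lemma tw_lemma (j : ℕ) (r : List (Fin 2)) :
    List.takeWhile (fun x => x == (0:Fin 2)) (List.replicate j 0 ++ [1] ++ r) = List.replicate j 0 := by
  induction j with
  | zero => simp
  | succ n ih => simp [List.replicate_succ, List.takeWhile_cons, ih]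

lemma infix_finite (T : List (Fin 2)) (n : ℕ) :
    {w : List (Fin 2) | w.length = n ∧ w <:+: T}.Finite :=
  T.sublists.toFinset.finite_toSet.subset (fun w hw => by simpa using hw.2.sublist)

lemma infix_ncard_le (T : List (Fin 2)) (n : ℕ) :
    {w : List (Fin 2) | w.length = n ∧ w <:+: T}.ncard ≤ T.sublists.toFinset.card := by
  rw [← Set.ncard_coe_finset]
  exact Set.ncard_le_ncard (fun w hw => by simpa using hw.2.sublist) T.sublists.toFinset.finite_toSet

/-- For `k ≥ 2`: all strings `a^j b a^{k-1-j}` (`0 ≤ j ≤ k-2`) occur as substrings of `s_k`,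
the number of distinct length-`k` substrings of `s_k` is at least `k - 1`, and hence
`δ(s_k) ≥ (k-1)/k`. -/
theorem stmt3 (k : ℕ) (hk : 2 ≤ k) :
    (∀ j ≤ k - 2,
      (List.replicate j (0 : Fin 2) ++ [1] ++ List.replicate (k - 1 - j) (0 : Fin 2)) <:+: sk k)
    ∧ k - 1 ≤ {w : List (Fin 2) | w.length = k ∧ w <:+: sk k}.ncard
    ∧ ((k : ℝ) - 1) / k ≤ deltaM (sk k) := by
  have hblock : (List.replicate (k-1) (0:Fin 2) ++ [1] ++ List.replicate k (0:Fin 2)) <:+: sk k := by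
    have hsk : sk k = ((List.range (k-2)).flatMap fun i => List.replicate (i+1) (0:Fin 2) ++ [1])
        ++ (List.replicate (k-1) (0:Fin 2) ++ [1]) ++ (List.replicate k (0:Fin 2) ++ [1]) := by
      unfold sk
      obtain ⟨n, rfl⟩ : ∃ n, k = n + 2 := ⟨k-2, by omega⟩
      rw [List.range_succ, List.range_succ]
      simp [List.flatMap_append]
    rw [hsk]
    exact ⟨(List.range (k-2)).flatMap fun i => List.replicate (i+1) (0:Fin 2) ++ [1], [1],
      by simp [List.append_assoc]⟩
  have h1 : ∀ j ≤ k - 2,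
      (List.replicate j (0 : Fin 2) ++ [1] ++ List.replicate (k - 1 - j) (0 : Fin 2)) <:+: sk k := by
    intro j hj
    refine List.IsInfix.trans ?_ hblock
    refine ⟨List.replicate (k-1-j) 0, List.replicate (j+1) 0, ?_⟩
    have e1 : List.replicate (k-1) (0:Fin 2) = List.replicate (k-1-j) 0 ++ List.replicate j 0 := by
      rw [← List.replicate_add]; congr 1; omega
    have e2 : List.replicate k (0:Fin 2) = List.replicate (k-1-j) 0 ++ List.replicate (j+1) 0 := by
      rw [← List.replicate_add]; congr 1; omega
    rw [e1, e2]
    simp only [List.append_assoc]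
  have hncard : k - 1 ≤ {v : List (Fin 2) | v.length = k ∧ v <:+: sk k}.ncard := by
    have hinj : Set.InjOn
        (fun j => List.replicate j (0 : Fin 2) ++ [1] ++ List.replicate (k - 1 - j) (0 : Fin 2))
        ↑(Finset.range (k-1)) := by
      intro i _ j _ h
      simp only at h
      have h2 := congrArg (List.takeWhile (fun x => x == (0:Fin 2))) h
      rw [tw_lemma, tw_lemma] at h2
      simpa using congrArg List.length h2
    have hcard : ((Finset.range (k-1)).image
        (fun j => List.replicate j (0 : Fin 2) ++ [1] ++ List.replicate (k - 1 - j) (0 : Fin 2))).card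
        = k - 1 := by
      rw [Finset.card_image_of_injOn hinj, Finset.card_range]
    have hsub : ↑((Finset.range (k-1)).image
        (fun j => List.replicate j (0 : Fin 2) ++ [1] ++ List.replicate (k - 1 - j) (0 : Fin 2)))
        ⊆ {v : List (Fin 2) | v.length = k ∧ v <:+: sk k} := by
      intro v hv
      simp only [Finset.coe_image, Set.mem_image, Finset.mem_coe, Finset.mem_range] at hv
      obtain ⟨j, hj, rfl⟩ := hv
      constructor
      · simp only [List.length_append, List.length_replicate, List.length_cons, List.length_nil]
        omega
      · exact h1 j (by omega)
    rw [← hcard, ← Set.ncard_coe_finset]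
    exact Set.ncard_le_ncard hsub (infix_finite _ _)
  refine ⟨h1, hncard, ?_⟩
  have hbdd : BddAbove (Set.range fun m : ℕ =>
      ({v : List (Fin 2) | v.length = m + 1 ∧ v <:+: sk k}.ncard : ℝ) / (m + 1)) := by
    refine ⟨((sk k).sublists.toFinset.card : ℝ), ?_⟩
    rintro x ⟨m, rfl⟩
    calc ({v : List (Fin 2) | v.length = m + 1 ∧ v <:+: sk k}.ncard : ℝ) / (m + 1)
        ≤ ({v : List (Fin 2) | v.length = m + 1 ∧ v <:+: sk k}.ncard : ℝ) := by
          apply div_le_self (by positivity)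
          have : (0:ℝ) ≤ m := Nat.cast_nonneg m
          linarith
      _ ≤ _ := by exact_mod_cast infix_ncard_le (sk k) (m+1)
  have hc : ((k-1:ℕ):ℝ) + 1 = (k:ℝ) := by
    have h1k : (1:ℕ) ≤ k := by omega
    push_cast [h1k]
    ring
  have hnum : ((k:ℝ) - 1) ≤ ({v : List (Fin 2) | v.length = k ∧ v <:+: sk k}.ncard : ℝ) := by
    calc ((k:ℝ) - 1) = ((k-1:ℕ):ℝ) := by rw [← hc]; ring
      _ ≤ _ := by exact_mod_cast hncard
  have hle : ((k : ℝ) - 1) / k ≤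
      ({v : List (Fin 2) | v.length = (k-1) + 1 ∧ v <:+: sk k}.ncard : ℝ) / ((k-1 : ℕ) + 1) := by
    have hkk : (k - 1 : ℕ) + 1 = k := by omega
    rw [hc, hkk]
    gcongr
  refine le_trans hle ?_
  have := le_ciSup hbdd (k-1)
  simpa [deltaM, show (k-1:ℕ)+1 = k from by omega] using this
end

section
/- Deleting a single character from a string decreases the measure δ by at most 1: if T' is obtained from T by deleting one character, then δ(T) ≤ δ(T') + 1. -/
/-!
An infix `w` of `T` of length `n` either avoids position `p`, and then survives as an infix of
`T' = T[0..p) ++ T[p+1..)`, or covers it, and then starts at one of the `n` positions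
`p + 1 - n, …, p`. Hence `T_n ≤ T'_n + n` for every `n`, and dividing by `n` gives
`δ(T) ≤ δ(T') + 1`.
-/

namespace List

variable {α : Type*}

def infixesOfLength (T : List α) (n : ℕ) : Set (List α) :=
  {w | w.length = n ∧ w <:+: T}

lemma infixesOfLength_subset_sublists (T : List α) (n : ℕ) [DecidableEq α] :
    T.infixesOfLength n ⊆ ↑T.sublists.toFinset := fun w hw => by
  simpa using hw.2.sublist

lemma infixesOfLength_finite (T : List α) (n : ℕ) : (T.infixesOfLength n).Finite := by
  classical
  exact T.sublists.toFinset.finite_toSet.subset (infixesOfLength_subset_sublists T n)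

lemma ncard_infixesOfLength_le_card_sublists (T : List α) (n : ℕ) [DecidableEq α] :
    (T.infixesOfLength n).ncard ≤ T.sublists.toFinset.card := by
  rw [← Set.ncard_coe_finset]
  exact Set.ncard_le_ncard (infixesOfLength_subset_sublists T n)

lemma infixesOfLength_subset_eraseIdx_union (T : List α) (p n : ℕ) :
    T.infixesOfLength n ⊆ (T.eraseIdx p).infixesOfLength n ∪
      (fun i => (T.drop i).take n) '' Set.Icc (p + 1 - n) p := by
  rintro w ⟨rfl, s, t, rfl⟩
  rw [eraseIdx_eq_take_drop_succ]
  by_cases h_before : s.length + w.length ≤ p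
  · refine Or.inl ⟨rfl, ?_⟩
    have : (s ++ w ++ t).take p = s ++ w ++ t.take (p - (s ++ w).length) := by
      rw [take_append, take_of_length_le (by simpa using h_before)]
    exact (show w <:+: _ from ⟨s, _, this.symm⟩).trans (prefix_append _ _).isInfix
  by_cases h_after : p + 1 ≤ s.length
  · refine Or.inl ⟨rfl, ?_⟩
    have : (s ++ w ++ t).drop (p + 1) = s.drop (p + 1) ++ w ++ t := by
      rw [append_assoc, drop_append_of_le_length h_after, append_assoc]
    exact (show w <:+: _ from ⟨_, t, this.symm⟩).trans (suffix_append _ _).isInfix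
  refine Or.inr ⟨s.length, ⟨by omega, by omega⟩, ?_⟩
  simp only [append_assoc, drop_left, take_left]

lemma ncard_infixesOfLength_le_eraseIdx_add (T : List α) (p n : ℕ) :
    (T.infixesOfLength n).ncard ≤ ((T.eraseIdx p).infixesOfLength n).ncard + n := by
  have h_windows : ((fun i => (T.drop i).take n) '' Set.Icc (p + 1 - n) p).ncard ≤ n := by
    refine (Set.ncard_image_le (Set.finite_Icc _ _)).trans ?_
    rw [← Finset.coe_Icc, Set.ncard_coe_finset, Nat.card_Icc]
    omega
  calc (T.infixesOfLength n).ncard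
      ≤ ((T.eraseIdx p).infixesOfLength n ∪
          (fun i => (T.drop i).take n) '' Set.Icc (p + 1 - n) p).ncard :=
        Set.ncard_le_ncard (infixesOfLength_subset_eraseIdx_union T p n)
          ((infixesOfLength_finite _ n).union ((Set.finite_Icc _ _).image _))
    _ ≤ _ := (Set.ncard_union_le _ _).trans (by omega)

end List

open List

lemma div_le_deltaM {α : Type*} (T : List α) (m : ℕ) :
    ((T.infixesOfLength (m + 1)).ncard : ℝ) / (m + 1) ≤ deltaM T := by
  classical
  refine le_ciSup (f := fun m : ℕ => ((T.infixesOfLength (m + 1)).ncard : ℝ) / (m + 1))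
    ⟨T.sublists.toFinset.card, ?_⟩ m
  rintro _ ⟨k, rfl⟩
  calc ((T.infixesOfLength (k + 1)).ncard : ℝ) / (k + 1)
      ≤ (T.infixesOfLength (k + 1)).ncard := div_le_self (by positivity) (by simp)
    _ ≤ T.sublists.toFinset.card := by exact_mod_cast ncard_infixesOfLength_le_card_sublists T _

theorem stmt4_general {α : Type*} (T : List α) (p : ℕ) :
    deltaM T ≤ deltaM (T.take p ++ T.drop (p + 1)) + 1 := by
  rw [← eraseIdx_eq_take_drop_succ]
  refine ciSup_le fun m => ?_
  set T' := T.eraseIdx p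
  have h_count : ((T.infixesOfLength (m + 1)).ncard : ℝ) ≤
      (T'.infixesOfLength (m + 1)).ncard + (m + 1) := by
    exact_mod_cast ncard_infixesOfLength_le_eraseIdx_add T p (m + 1)
  calc ((T.infixesOfLength (m + 1)).ncard : ℝ) / (m + 1)
      ≤ ((T'.infixesOfLength (m + 1)).ncard + (m + 1)) / (m + 1) := by gcongr
    _ = ((T'.infixesOfLength (m + 1)).ncard : ℝ) / (m + 1) + 1 := by field_simp
    _ ≤ deltaM T' + 1 := by grw [div_le_deltaM T' m]

/-- Deleting one character (the one at position `p`) from `T` decreases `δ` by at most 1: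
`δ(T) ≤ δ(T') + 1` where `T' = T[1..p-1]·T[p+1..n]`. -/
theorem stmt4 {α : Type*} (T : List α) (p : ℕ) (hp : p < T.length) :
    deltaM T ≤ deltaM (T.take p ++ T.drop (p + 1)) + 1 :=
  stmt4_general T p
end

section
/- Let D be a directed acyclic multigraph with root r (every node reachable from r) and sink set W, and for each node v let λ(v) = (⌊log₂ π(r,v)⌋, ⌊log₂ π(v,W)⌋), where π(u,v) counts directed paths from u to v and π(v,W) = ∑_{w∈W} π(v,w). Then every path in D from r to a sink node contains at most 2·log₂ n(D) edges (u,v) with λ(u) ≠ λ(v), where n(D) = π(r,W). -/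
/-!
Along an edge `u → v`, every path from `r` to `u` extends to one from `r` to `v`, and every
path from `v` to a sink extends to one from `u`; so the first coordinate of `λ` never decreases
and the second never increases along a path. An edge where `λ` changes therefore raises the first
coordinate or lowers the second by at least one. On a root-to-sink path the first coordinate runs
from `⌊log₂ π(r,r)⌋ = 0` to at most `⌊log₂ n(D)⌋`, and the second from `⌊log₂ n(D)⌋` down to `0`.
-/

/-- A finite directed acyclic multigraph, given by a finite set of numbered edges `(u, i, v)`. -/
structure MultiDAG (V : Type*) [DecidableEq V] where
  E : Finset (V × ℕ × V)

variable {V : Type*} [DecidableEq V]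

/-- `IsPath D u v p` : the list of edges `p` forms a directed path from `u` to `v` in `D`. -/
def IsPath (D : MultiDAG V) : V → V → List (V × ℕ × V) → Prop
  | u, v, [] => u = v
  | u, v, e :: p => e ∈ D.E ∧ e.1 = u ∧ IsPath D e.2.2 v p

/-- `π(u,v)` : the number of directed paths from `u` to `v`. -/
noncomputable def pathCount (D : MultiDAG V) (u v : V) : ℕ :=
  {p : List (V × ℕ × V) | IsPath D u v p}.ncard

/-- A sink node: no outgoing edges. -/
def IsSink (D : MultiDAG V) (w : V) : Prop := ∀ e ∈ D.E, e.1 ≠ w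

/-- `π(v,W)` : the number of directed paths from `v` to some sink node. -/
noncomputable def pathCountW (D : MultiDAG V) (v : V) : ℕ :=
  {p : List (V × ℕ × V) | ∃ w, IsSink D w ∧ IsPath D v w p}.ncard

/-- `λ(v) = (⌊log₂ π(r,v)⌋, ⌊log₂ π(v,W)⌋)`. -/
noncomputable def lam (D : MultiDAG V) (r v : V) : ℕ × ℕ :=
  (Nat.log 2 (pathCount D r v), Nat.log 2 (pathCountW D v))

namespace MultiDAG

def IsAcyclic (D : MultiDAG V) : Prop :=
  ∀ v (p : List (V × ℕ × V)), p ≠ [] → ¬ IsPath D v v p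

end MultiDAG

theorem List.finite_setOf_nodup_subset {α : Type*} (s : Finset α) :
    {l : List α | l.Nodup ∧ ∀ x ∈ l, x ∈ s}.Finite := by
  refine ((List.finite_length_le s s.card).image (List.map Subtype.val)).subset ?_
  rintro l ⟨hnd, hs⟩
  have hnd' : (l.pmap Subtype.mk hs).Nodup := hnd.pmap fun _ _ _ _ ↦ Subtype.mk.inj
  refine ⟨l.pmap Subtype.mk hs, ?_, by simp [List.map_pmap, List.pmap_eq_map]⟩
  simpa using hnd'.length_le_card

namespace IsPath

variable {D : MultiDAG V} {u v w : V} {p q : List (V × ℕ × V)}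

theorem append (hp : IsPath D u v p) (hq : IsPath D v w q) : IsPath D u w (p ++ q) := by
  induction p generalizing u with
  | nil => cases hp; exact hq
  | cons e p ih => exact ⟨hp.1, hp.2.1, ih hp.2.2⟩

theorem of_append (h : IsPath D u w (p ++ q)) : ∃ v, IsPath D u v p ∧ IsPath D v w q := by
  induction p generalizing u with
  | nil => exact ⟨u, rfl, h⟩
  | cons e p ih =>
    obtain ⟨v, hp, hq⟩ := ih h.2.2
    exact ⟨v, ⟨h.1, h.2.1, hp⟩, hq⟩

theorem mem_edges (h : IsPath D u v p) : ∀ e ∈ p, e ∈ D.E := by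
  induction p generalizing u with
  | nil => simp
  | cons e p ih => exact List.forall_mem_cons.2 ⟨h.1, ih h.2.2⟩

theorem nodup (hD : D.IsAcyclic) (h : IsPath D u v p) : p.Nodup := by
  induction p generalizing u with
  | nil => exact List.nodup_nil
  | cons e q ih =>
    refine List.nodup_cons.2 ⟨fun he ↦ ?_, ih h.2.2⟩
    -- a repeated edge `e` closes the cycle `e` followed by the part of `q` before `e`
    obtain ⟨q₁, q₂, rfl⟩ := List.append_of_mem he
    obtain ⟨m, hq₁, hq₂⟩ := of_append h.2.2
    have hm : e.1 = m := hq₂.2.1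
    exact hD e.1 (e :: q₁) (List.cons_ne_nil _ _) ⟨h.1, rfl, hm ▸ hq₁⟩

end IsPath

section PathCounts

variable {D : MultiDAG V}

theorem MultiDAG.IsAcyclic.finite_paths_from (hD : D.IsAcyclic) (u : V) :
    {p : List (V × ℕ × V) | ∃ w, IsPath D u w p}.Finite :=
  (List.finite_setOf_nodup_subset D.E).subset fun _ ⟨_, hp⟩ ↦ ⟨hp.nodup hD, hp.mem_edges⟩

theorem pathCount_self (hD : D.IsAcyclic) (u : V) : pathCount D u u = 1 := by
  have : {p : List (V × ℕ × V) | IsPath D u u p} = {[]} :=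
    Set.eq_singleton_iff_unique_mem.2 ⟨rfl, fun p hp ↦ by_contra fun hne ↦ hD u p hne hp⟩
  rw [pathCount, this, Set.ncard_singleton]

theorem pathCountW_of_isSink {w : V} (hw : IsSink D w) : pathCountW D w = 1 := by
  have : {p : List (V × ℕ × V) | ∃ w', IsSink D w' ∧ IsPath D w w' p} = {[]} := by
    refine Set.eq_singleton_iff_unique_mem.2 ⟨⟨w, hw, rfl⟩, ?_⟩
    rintro (_ | ⟨e, p⟩) ⟨w', -, hp⟩
    · rfl
    · exact absurd hp.2.1 (hw e hp.1)
  rw [pathCountW, this, Set.ncard_singleton]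

theorem pathCount_le_pathCount_of_mem (hD : D.IsAcyclic) (r : V) {e : V × ℕ × V}
    (he : e ∈ D.E) : pathCount D r e.1 ≤ pathCount D r e.2.2 :=
  Set.ncard_le_ncard_of_injOn (· ++ [e]) (fun _ hp ↦ hp.append ⟨he, rfl, rfl⟩)
    (fun _ _ _ _ h ↦ List.append_cancel_right h)
    ((hD.finite_paths_from r).subset fun _ hp ↦ ⟨_, hp⟩)

theorem pathCountW_le_pathCountW_of_mem (hD : D.IsAcyclic) {e : V × ℕ × V} (he : e ∈ D.E) :
    pathCountW D e.2.2 ≤ pathCountW D e.1 :=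
  Set.ncard_le_ncard_of_injOn (e :: ·) (fun _ ⟨w, hw, hp⟩ ↦ ⟨w, hw, he, rfl, hp⟩)
    (fun _ _ _ _ h ↦ List.cons_injective h)
    ((hD.finite_paths_from e.1).subset fun _ ⟨w, _, hp⟩ ↦ ⟨w, hp⟩)

theorem pathCount_le_pathCountW (hD : D.IsAcyclic) (r : V) {w : V} (hw : IsSink D w) :
    pathCount D r w ≤ pathCountW D r :=
  Set.ncard_le_ncard (fun _ hp ↦ ⟨w, hw, hp⟩)
    ((hD.finite_paths_from r).subset fun _ ⟨w, _, hp⟩ ↦ ⟨w, hp⟩)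

end PathCounts

theorem IsPath.length_filter_ne_add_le {D : MultiDAG V} (f : V → ℕ × ℕ)
    (hf₁ : ∀ e ∈ D.E, (f e.1).1 ≤ (f e.2.2).1) (hf₂ : ∀ e ∈ D.E, (f e.2.2).2 ≤ (f e.1).2)
    {u v : V} {p : List (V × ℕ × V)} (hp : IsPath D u v p) :
    (p.filter fun e ↦ f e.1 ≠ f e.2.2).length + (f u).1 + (f v).2 ≤ (f v).1 + (f u).2 := by
  induction p generalizing u with
  | nil => cases hp; simp
  | cons e q ih =>
    obtain ⟨he, rfl, hq⟩ := hp
    have ih := ih hq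
    have h₁ := hf₁ e he
    have h₂ := hf₂ e he
    by_cases hch : f e.1 = f e.2.2
    · rw [List.filter_cons_of_neg (by simpa using hch), hch]
      omega
    · rw [List.filter_cons_of_pos (by simpa using hch), List.length_cons]
      have : (f e.1).1 ≠ (f e.2.2).1 ∨ (f e.1).2 ≠ (f e.2.2).2 := by
        contrapose! hch
        exact Prod.ext hch.1 hch.2
      omega

theorem lam_fst_le_of_mem {D : MultiDAG V} (hD : D.IsAcyclic) (r : V) {e : V × ℕ × V}
    (he : e ∈ D.E) : (lam D r e.1).1 ≤ (lam D r e.2.2).1 :=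
  Nat.log_mono_right (b := 2) (pathCount_le_pathCount_of_mem hD r he)

theorem lam_snd_le_of_mem {D : MultiDAG V} (hD : D.IsAcyclic) (r : V) {e : V × ℕ × V}
    (he : e ∈ D.E) : (lam D r e.2.2).2 ≤ (lam D r e.1).2 :=
  Nat.log_mono_right (b := 2) (pathCountW_le_pathCountW_of_mem hD he)

open scoped Classical in
theorem stmt6_general (D : MultiDAG V) (r : V)
    (hacyc : ∀ v (p : List (V × ℕ × V)), p ≠ [] → ¬ IsPath D v v p)
    (w : V) (p : List (V × ℕ × V)) (hw : IsSink D w) (hp : IsPath D r w p) :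
    ((p.filter fun e => decide (lam D r e.1 ≠ lam D r e.2.2)).length : ℝ)
      ≤ 2 * Real.logb 2 (pathCountW D r) := by
  have hcount := hp.length_filter_ne_add_le (lam D r) (fun _ ↦ lam_fst_le_of_mem hacyc r)
    (fun _ ↦ lam_snd_le_of_mem hacyc r)
  have hr : (lam D r r).1 = 0 := by simp [lam, pathCount_self hacyc]
  have hw₂ : (lam D r w).2 = 0 := by simp [lam, pathCountW_of_isSink hw]
  have hw₁ : (lam D r w).1 ≤ Nat.log 2 (pathCountW D r) :=
    Nat.log_mono_right (b := 2) (pathCount_le_pathCountW hacyc r hw)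
  have hr₂ : (lam D r r).2 = Nat.log 2 (pathCountW D r) := rfl
  have hlog := Real.natLog_le_logb (pathCountW D r) 2
  push_cast at hlog
  have hnat : (p.filter fun e => decide (lam D r e.1 ≠ lam D r e.2.2)).length
      ≤ 2 * Nat.log 2 (pathCountW D r) := by omega
  calc ((p.filter fun e => decide (lam D r e.1 ≠ lam D r e.2.2)).length : ℝ)
      ≤ 2 * Nat.log 2 (pathCountW D r) := by exact_mod_cast hnat
    _ ≤ 2 * Real.logb 2 (pathCountW D r) := by gcongr

open scoped Classical in
/-- Every root-to-sink path of a finite rooted DAG `D` contains at most `2 log₂ n(D)` edges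
`(u,i,v)` with `λ(u) ≠ λ(v)`, where `n(D) = π(r,W)`. -/
theorem stmt6 [Fintype V] (D : MultiDAG V) (r : V)
    (hacyc : ∀ v (p : List (V × ℕ × V)), p ≠ [] → ¬ IsPath D v v p)
    (hreach : ∀ v, ∃ p, IsPath D r v p)
    (hroot : ∀ e ∈ D.E, e.2.2 ≠ r)
    (w : V) (p : List (V × ℕ × V)) (hw : IsSink D w) (hp : IsPath D r w p) :
    ((p.filter fun e => decide (lam D r e.1 ≠ lam D r e.2.2)).length : ℝ)
      ≤ 2 * Real.logb 2 (pathCountW D r) :=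
  stmt6_general D r hacyc w p hw hp
end
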